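/- Neither greedy rule is optimal (the claim illustrated by Example 1): There exist finitely many sources S_1, …, S_l (finite sets of tuples with access times ta_i ≥ 0 and per-tuple transfer times tr_i > 0) and a number k with 1 ≤ k ≤ |S_1 ∪ … ∪ S_l| such that: the greedy-by-query-rate permutation (which at each step selects the not-yet-chosen source maximizing (|S| − |∩S|)/(ta + tr·|S|)) does not achieve the minimum time cost T(Q_k(·)) over all permutations, and the greedy-by-residual-tuples permutation (which at each step selects the not-yet-chosen source maximizing the residual tuple count |S| − |∩S|) also does not achieve the minimum time cost. -/

import Mathlib

open Finset

variable {α : Type*}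

/-- The tuples retrieved from the first `p` positions of the permutation `σ`
(position `i` queries source `σ i`). -/
def prefUnion [DecidableEq α] {l : ℕ} (S : Fin l → Finset α)
    (σ : Equiv.Perm (Fin l)) (p : ℕ) : Finset α :=
  (Finset.univ.filter (fun i : Fin l => (i : ℕ) < p)).biUnion (fun i => S (σ i))

/-- The residual count at position `i` of the permutation `σ`:
the number of tuples of the `i`-th queried source not contained in any earlier source. -/
def resid [DecidableEq α] {l : ℕ} (S : Fin l → Finset α)
    (σ : Equiv.Perm (Fin l)) (i : Fin l) : ℕ :=
  (S (σ i) \ prefUnion S σ (i : ℕ)).card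

/-- The time needed to query source `i` completely: access time plus
per-tuple transfer time times the number of tuples. -/
def srcTime {l : ℕ} (S : Fin l → Finset α) (ta tr : Fin l → ℝ) (i : Fin l) : ℝ :=
  ta i + tr i * (S i).card

/-- Cumulative residual tuple count of the first `p` positions. -/
def cumResid [DecidableEq α] {l : ℕ} (S : Fin l → Finset α)
    (σ : Equiv.Perm (Fin l)) (p : ℕ) : ℕ :=
  ∑ i ∈ Finset.univ.filter (fun i : Fin l => (i : ℕ) < p), resid S σ i

/-- Cumulative time cost of querying the first `p` positions. -/
def cumTime {l : ℕ} (S : Fin l → Finset α) (ta tr : Fin l → ℝ)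
    (σ : Equiv.Perm (Fin l)) (p : ℕ) : ℝ :=
  ∑ i ∈ Finset.univ.filter (fun i : Fin l => (i : ℕ) < p), srcTime S ta tr (σ i)

/-- `i_k`: the least prefix length whose cumulative residual count reaches `k`. -/
noncomputable def ikOf [DecidableEq α] {l : ℕ} (S : Fin l → Finset α)
    (σ : Equiv.Perm (Fin l)) (k : ℕ) : ℕ :=
  sInf {p : ℕ | k ≤ cumResid S σ p}

/-- The average query rate `v_avg(Π, k)`. -/
noncomputable def vAvg [DecidableEq α] {l : ℕ} (S : Fin l → Finset α) (ta tr : Fin l → ℝ)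
    (σ : Equiv.Perm (Fin l)) (k : ℕ) : ℝ :=
  (cumResid S σ (ikOf S σ k) : ℝ) / cumTime S ta tr σ (ikOf S σ k)

/-- The time cost `T(Q_k(Π)) = k / v_avg(Π, k)`. -/
noncomputable def timeCost [DecidableEq α] {l : ℕ} (S : Fin l → Finset α) (ta tr : Fin l → ℝ)
    (σ : Equiv.Perm (Fin l)) (k : ℕ) : ℝ :=
  (k : ℝ) / vAvg S ta tr σ k

/-- A permutation is greedy-by-query-rate if at each step `i` the chosen source
maximizes the query rate `|S \ U_{i-1}| / (ta + tr·|S|)` among all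
not-yet-chosen sources (which occupy the positions `j ≥ i`). -/
def IsGreedyRate [DecidableEq α] {l : ℕ} (S : Fin l → Finset α) (ta tr : Fin l → ℝ)
    (σ : Equiv.Perm (Fin l)) : Prop :=
  ∀ i j : Fin l, i ≤ j →
    ((S (σ j) \ prefUnion S σ (i : ℕ)).card : ℝ) / srcTime S ta tr (σ j)
      ≤ ((S (σ i) \ prefUnion S σ (i : ℕ)).card : ℝ) / srcTime S ta tr (σ i)

/-- A permutation is optimal if its time cost is minimal among all permutations. -/
def IsOptimal [DecidableEq α] {l : ℕ} (S : Fin l → Finset α) (ta tr : Fin l → ℝ)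
    (σopt : Equiv.Perm (Fin l)) (k : ℕ) : Prop :=
  ∀ σ : Equiv.Perm (Fin l), timeCost S ta tr σopt k ≤ timeCost S ta tr σ k

/-- A permutation is greedy-by-residual-tuples if at each step `i` the chosen
source maximizes the residual tuple count `|S| − |∩S| = |S \ U_{i-1}|` among all
not-yet-chosen sources (which occupy the positions `j ≥ i`). -/
def IsGreedyResid [DecidableEq α] {l : ℕ} (S : Fin l → Finset α)
    (σ : Equiv.Perm (Fin l)) : Prop :=
  ∀ i j : Fin l, i ≤ j →
    (S (σ j) \ prefUnion S σ (i : ℕ)).card ≤ (S (σ i) \ prefUnion S σ (i : ℕ)).card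

/-!
Take three sources `A = {0,…,4}`, `B = {10,…,29}`, `C = {0,…,9}` with transfer times
`1/10, 11/5, 1` (so reading them costs `1/2, 44, 10`) and `k = 10`.
Reading `C` alone delivers the ten tuples at cost `10`.
The rate rule starts with the cheap `A` (rate `10`) and must then read `C` (rate `1/2` against
`20/44` for `B`), only half of which is new: cost `21/2`.
The residual rule starts with the large but slow `B`: cost `22`.
Since each rule's first choices are forced by strict inequalities, this holds for every
greedy permutation, not just one.
-/

section Prefix

variable {l : ℕ} (S : Fin l → Finset α) (ta tr : Fin l → ℝ) (σ : Equiv.Perm (Fin l))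

lemma filter_val_lt_succ {p : ℕ} (hp : p < l) :
    univ.filter (fun i : Fin l => (i : ℕ) < p + 1)
      = insert ⟨p, hp⟩ (univ.filter (fun i : Fin l => (i : ℕ) < p)) := by
  ext i
  simp only [mem_filter, mem_univ, true_and, mem_insert, Fin.ext_iff]
  omega

lemma cumTime_succ {p : ℕ} (hp : p < l) :
    cumTime S ta tr σ (p + 1) = srcTime S ta tr (σ ⟨p, hp⟩) + cumTime S ta tr σ p := by
  rw [cumTime, filter_val_lt_succ hp, sum_insert (by simp), cumTime]

variable [DecidableEq α]

@[simp]
lemma prefUnion_zero : prefUnion S σ 0 = ∅ := by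
  simp [prefUnion]

lemma prefUnion_succ {p : ℕ} (hp : p < l) :
    prefUnion S σ (p + 1) = S (σ ⟨p, hp⟩) ∪ prefUnion S σ p := by
  rw [prefUnion, filter_val_lt_succ hp, biUnion_insert, prefUnion]

@[simp]
lemma cumResid_zero : cumResid S σ 0 = 0 := by
  simp [cumResid]

lemma cumResid_succ {p : ℕ} (hp : p < l) :
    cumResid S σ (p + 1) = resid S σ ⟨p, hp⟩ + cumResid S σ p := by
  rw [cumResid, filter_val_lt_succ hp, sum_insert (by simp), cumResid]

lemma cumResid_mono : Monotone (cumResid S σ) := fun _ _ hpq =>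
  sum_le_sum_of_subset (monotone_filter_right _ fun _ _ h => h.trans_le hpq)

lemma ikOf_eq_succ {k p : ℕ} (hlt : cumResid S σ p < k) (hle : k ≤ cumResid S σ (p + 1)) :
    ikOf S σ k = p + 1 :=
  (Nat.sInf_upward_closed_eq_succ_iff
    (fun _ _ hmn hm => le_trans hm (cumResid_mono S σ hmn)) p).2 ⟨hle, not_le.2 hlt⟩

lemma timeCost_eq_mul_div (k : ℕ) :
    timeCost S ta tr σ k
      = k * cumTime S ta tr σ (ikOf S σ k) / cumResid S σ (ikOf S σ k) :=
  div_div_eq_mul_div _ _ _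

end Prefix

section FirstPosition

variable {n : ℕ} (S : Fin (n + 1) → Finset α) (ta tr : Fin (n + 1) → ℝ)
  (σ : Equiv.Perm (Fin (n + 1)))

lemma cumTime_one : cumTime S ta tr σ 1 = srcTime S ta tr (σ 0) := by
  rw [cumTime_succ S ta tr σ n.succ_pos]
  simp [cumTime]

variable [DecidableEq α]

lemma prefUnion_one : prefUnion S σ 1 = S (σ 0) := by
  simp [prefUnion_succ S σ n.succ_pos]

lemma cumResid_one : cumResid S σ 1 = #(S (σ 0)) := by
  simp [cumResid_succ S σ n.succ_pos, resid]

lemma timeCost_of_le_card_apply_zero {k : ℕ} (hk : 0 < k) (hle : k ≤ #(S (σ 0))) :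
    timeCost S ta tr σ k = k * srcTime S ta tr (σ 0) / #(S (σ 0)) := by
  have hik : ikOf S σ k = 0 + 1 := ikOf_eq_succ S σ (by simpa) (by rwa [cumResid_one])
  rw [timeCost_eq_mul_div, hik, cumResid_one, cumTime_one]

variable {S ta tr σ}

lemma IsGreedyRate.rate_le_apply_zero (hσ : IsGreedyRate S ta tr σ) (j : Fin (n + 1)) :
    (#(S j) : ℝ) / srcTime S ta tr j ≤ #(S (σ 0)) / srcTime S ta tr (σ 0) := by
  simpa using hσ 0 (σ.symm j) (Fin.zero_le _)

lemma IsGreedyRate.apply_zero_eq (hσ : IsGreedyRate S ta tr σ) {i : Fin (n + 1)}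
    (hi : ∀ j ≠ i, (#(S j) : ℝ) / srcTime S ta tr j < #(S i) / srcTime S ta tr i) :
    σ 0 = i := by
  by_contra hne
  exact (hi _ hne).not_ge (hσ.rate_le_apply_zero i)

lemma IsGreedyResid.card_le_apply_zero (hσ : IsGreedyResid S σ) (j : Fin (n + 1)) :
    #(S j) ≤ #(S (σ 0)) := by
  simpa using hσ 0 (σ.symm j) (Fin.zero_le _)

lemma IsGreedyResid.apply_zero_eq (hσ : IsGreedyResid S σ) {i : Fin (n + 1)}
    (hi : ∀ j ≠ i, #(S j) < #(S i)) : σ 0 = i := by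
  by_contra hne
  exact (hi _ hne).not_ge (hσ.card_le_apply_zero i)

end FirstPosition

section SecondPosition

variable [DecidableEq α] {n : ℕ} (S : Fin (n + 2) → Finset α) (ta tr : Fin (n + 2) → ℝ)
  (σ : Equiv.Perm (Fin (n + 2)))

lemma cumResid_two : cumResid S σ 2 = #(S (σ 0)) + #(S (σ 1) \ S (σ 0)) := by
  rw [cumResid_succ S σ (by omega : 1 < n + 2), cumResid_one, resid, add_comm]
  simp [prefUnion_one]

lemma timeCost_of_card_apply_zero_lt {k : ℕ} (hlt : #(S (σ 0)) < k)
    (hle : k ≤ #(S (σ 0)) + #(S (σ 1) \ S (σ 0))) :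
    timeCost S ta tr σ k = k * (srcTime S ta tr (σ 0) + srcTime S ta tr (σ 1)) /
      (#(S (σ 0)) + #(S (σ 1) \ S (σ 0)) : ℕ) := by
  have hik : ikOf S σ k = 1 + 1 :=
    ikOf_eq_succ S σ (by rwa [cumResid_one]) (by rwa [cumResid_two])
  rw [timeCost_eq_mul_div, hik, cumResid_two, cumTime_succ S ta tr σ (by omega : 1 < n + 2),
    cumTime_one, add_comm (srcTime _ _ _ _), Fin.mk_one]

variable {S ta tr σ}

lemma IsGreedyRate.rate_le_apply_one (hσ : IsGreedyRate S ta tr σ) {j : Fin (n + 2)}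
    (hj : j ≠ σ 0) :
    (#(S j \ S (σ 0)) : ℝ) / srcTime S ta tr j
      ≤ #(S (σ 1) \ S (σ 0)) / srcTime S ta tr (σ 1) := by
  have hpos : 1 ≤ σ.symm j := Fin.one_le_of_ne_zero (by simpa [σ.symm_apply_eq] using hj)
  simpa [prefUnion_one] using hσ 1 (σ.symm j) hpos

lemma IsGreedyRate.apply_one_eq (hσ : IsGreedyRate S ta tr σ) {i : Fin (n + 2)}
    (hi0 : i ≠ σ 0) (hi : ∀ j ≠ i, j ≠ σ 0 →
      (#(S j \ S (σ 0)) : ℝ) / srcTime S ta tr j < #(S i \ S (σ 0)) / srcTime S ta tr i) :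
    σ 1 = i := by
  by_contra hne
  exact (hi _ hne (σ.injective.ne (by simp))).not_ge (hσ.rate_le_apply_one hi0)

end SecondPosition

namespace GreedyCounterexample

def sources : Fin 3 → Finset ℕ := ![range 5, Ico 10 30, range 10]

def accessTime : Fin 3 → ℝ := 0

noncomputable def transferTime : Fin 3 → ℝ := ![1 / 10, 11 / 5, 1]

@[simp] lemma card_sources_zero : #(sources 0) = 5 := rfl
@[simp] lemma card_sources_one : #(sources 1) = 20 := rfl
@[simp] lemma card_sources_two : #(sources 2) = 10 := rfl
@[simp] lemma card_sources_one_sdiff_zero : #(sources 1 \ sources 0) = 20 := by decide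
@[simp] lemma card_sources_two_sdiff_zero : #(sources 2 \ sources 0) = 5 := by decide

@[simp] lemma srcTime_zero : srcTime sources accessTime transferTime 0 = 1 / 2 := by
  simp [srcTime, accessTime, transferTime]; norm_num
@[simp] lemma srcTime_one : srcTime sources accessTime transferTime 1 = 44 := by
  simp [srcTime, accessTime, transferTime]; norm_num
@[simp] lemma srcTime_two : srcTime sources accessTime transferTime 2 = 10 := by
  simp [srcTime, accessTime, transferTime]

def rateOrder : Equiv.Perm (Fin 3) := Equiv.swap 1 2

def residOrder : Equiv.Perm (Fin 3) := Equiv.swap 0 1 * Equiv.swap 1 2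

def fastOrder : Equiv.Perm (Fin 3) := Equiv.swap 0 2

lemma isGreedyRate_rateOrder : IsGreedyRate sources accessTime transferTime rateOrder := by
  intro i j hij
  fin_cases i <;> fin_cases j <;> simp at hij <;>
    simp [rateOrder, prefUnion_one, Equiv.swap_apply_of_ne_of_ne] <;> norm_num

lemma isGreedyResid_residOrder : IsGreedyResid sources residOrder := by
  unfold IsGreedyResid
  decide

lemma apply_zero_of_isGreedyRate {σ : Equiv.Perm (Fin 3)}
    (hσ : IsGreedyRate sources accessTime transferTime σ) : σ 0 = 0 :=
  hσ.apply_zero_eq fun j hj => by fin_cases j <;> simp at hj ⊢ <;> norm_num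

lemma apply_one_of_isGreedyRate {σ : Equiv.Perm (Fin 3)}
    (hσ : IsGreedyRate sources accessTime transferTime σ) : σ 1 = 2 := by
  have h0 := apply_zero_of_isGreedyRate hσ
  refine hσ.apply_one_eq (by simp [h0]) fun j hj2 hj0 => ?_
  rw [h0] at hj0 ⊢
  fin_cases j <;> simp at hj2 hj0 ⊢
  norm_num

lemma apply_zero_of_isGreedyResid {σ : Equiv.Perm (Fin 3)} (hσ : IsGreedyResid sources σ) :
    σ 0 = 1 :=
  hσ.apply_zero_eq fun j hj => by fin_cases j <;> simp at hj ⊢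

lemma timeCost_fastOrder : timeCost sources accessTime transferTime fastOrder 10 = 10 := by
  rw [timeCost_of_le_card_apply_zero _ _ _ _ (by norm_num) (by decide)]
  norm_num [fastOrder]

lemma timeCost_of_isGreedyRate {σ : Equiv.Perm (Fin 3)}
    (hσ : IsGreedyRate sources accessTime transferTime σ) :
    timeCost sources accessTime transferTime σ 10 = 21 / 2 := by
  have h0 := apply_zero_of_isGreedyRate hσ
  have h1 := apply_one_of_isGreedyRate hσ
  rw [timeCost_of_card_apply_zero_lt _ _ _ _ (by simp [h0]) (by simp [h0, h1]), h0, h1]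
  norm_num

lemma timeCost_of_isGreedyResid {σ : Equiv.Perm (Fin 3)} (hσ : IsGreedyResid sources σ) :
    timeCost sources accessTime transferTime σ 10 = 22 := by
  have h0 := apply_zero_of_isGreedyResid hσ
  rw [timeCost_of_le_card_apply_zero _ _ _ _ (by norm_num) (by simp [h0]), h0]
  norm_num

end GreedyCounterexample

open GreedyCounterexample

/-- **Neither greedy rule is optimal** (the claim illustrated by Example 1).
There is an instance — finitely many sources with nonnegative access times,
positive per-tuple transfer times and a feasible `1 ≤ k ≤ |S_1 ∪ … ∪ S_l|` —
on which greedy-by-query-rate permutations exist but none achieves the minimum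
time cost, and greedy-by-residual-tuples permutations exist but none achieves
the minimum time cost either. -/
theorem greedy_not_optimal :
    ∃ (l : ℕ) (S : Fin l → Finset ℕ) (ta tr : Fin l → ℝ) (k : ℕ),
      0 < l ∧ (∀ i, (S i).Nonempty) ∧ (∀ i, 0 ≤ ta i) ∧ (∀ i, 0 < tr i) ∧
      1 ≤ k ∧ k ≤ (Finset.univ.biUnion S).card ∧
      (∃ σ : Equiv.Perm (Fin l), IsGreedyRate S ta tr σ) ∧
      (∀ σ : Equiv.Perm (Fin l), IsGreedyRate S ta tr σ →
        ∃ σ' : Equiv.Perm (Fin l), timeCost S ta tr σ' k < timeCost S ta tr σ k) ∧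
      (∃ σ : Equiv.Perm (Fin l), IsGreedyResid S σ) ∧
      (∀ σ : Equiv.Perm (Fin l), IsGreedyResid S σ →
        ∃ σ' : Equiv.Perm (Fin l), timeCost S ta tr σ' k < timeCost S ta tr σ k) := by
  refine ⟨3, sources, accessTime, transferTime, 10, by norm_num, by decide, fun _ => le_rfl,
    fun i => ?_, by norm_num, by decide, ⟨rateOrder, isGreedyRate_rateOrder⟩,
    fun σ hσ => ⟨fastOrder, ?_⟩, ⟨residOrder, isGreedyResid_residOrder⟩,
    fun σ hσ => ⟨fastOrder, ?_⟩⟩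
  · fin_cases i <;> simp [transferTime]
  · rw [timeCost_fastOrder, timeCost_of_isGreedyRate hσ]
    norm_num
  · rw [timeCost_fastOrder, timeCost_of_isGreedyResid hσ]
    norm_num
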